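/- The coordinate ring ℂ[x,y,z,t]/(x²y + z² + x + t³) of the Koras-Russell cubic threefold is isomorphic as a ℂ-algebra to ℂ[x,y,z,t]/(x²y + (1+x)(z²+x+t³)). -/

import Mathlib

open MvPolynomial

/-- P = x²y + z² + x + t³ -/
noncomputable def KRP : MvPolynomial (Fin 4) ℂ :=
  X 0 ^ 2 * X 1 + X 2 ^ 2 + X 0 + X 3 ^ 3

/-- Q = x²y + (1+x)(z² + x + t³) -/
noncomputable def KRQ : MvPolynomial (Fin 4) ℂ :=
  X 0 ^ 2 * X 1 + (1 + X 0) * (X 2 ^ 2 + X 0 + X 3 ^ 3)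

/-!
Write `w = z² + x + t³`. The substitution `y ↦ (1 + x)y` sends `Q` to `(1 + x)P`, so it induces a
map `ℂ[x,y,z,t]/(Q) → ℂ[x,y,z,t]/(P)`. Modulo `P` we have `x²y = -w`, hence
`y = (1 - x)(1 + x)y - w`; so `y ↦ (1 - x)y - w` is an inverse modulo the ideals, and indeed it
sends `P` to `(1 - x)Q`.
-/

namespace Ideal

variable {R A B : Type*} [CommSemiring R] [CommRing A] [CommRing B] [Algebra R A] [Algebra R B]

def quotientEquivAlgOfInverseModulo (I : Ideal A) (J : Ideal B) (f : A →ₐ[R] B)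
    (g : B →ₐ[R] A) (hf : I ≤ J.comap f) (hg : J ≤ I.comap g)
    (hgf : (Quotient.mkₐ R I).comp (g.comp f) = Quotient.mkₐ R I)
    (hfg : (Quotient.mkₐ R J).comp (f.comp g) = Quotient.mkₐ R J) :
    (A ⧸ I) ≃ₐ[R] (B ⧸ J) :=
  AlgEquiv.ofAlgHom (quotientMapₐ J f hf) (quotientMapₐ I g hg)
    (Quotient.algHom_ext R (by rw [AlgHom.comp_assoc, quotient_map_comp_mkₐ,
      ← AlgHom.comp_assoc, quotient_map_comp_mkₐ, AlgHom.comp_assoc, hfg, AlgHom.id_comp]))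
    (Quotient.algHom_ext R (by rw [AlgHom.comp_assoc, quotient_map_comp_mkₐ,
      ← AlgHom.comp_assoc, quotient_map_comp_mkₐ, AlgHom.comp_assoc, hgf, AlgHom.id_comp]))

end Ideal

namespace MvPolynomial

theorem mkₐ_comp_eq_mkₐ_of_sub_mem {R σ : Type*} [CommRing R] {I : Ideal (MvPolynomial σ R)}
    {φ : MvPolynomial σ R →ₐ[R] MvPolynomial σ R} (h : ∀ i, φ (X i) - X i ∈ I) :
    (Ideal.Quotient.mkₐ R I).comp φ = Ideal.Quotient.mkₐ R I :=
  MvPolynomial.algHom_ext fun i => by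
    rw [AlgHom.comp_apply, Ideal.Quotient.mkₐ_eq_mk, Ideal.Quotient.eq]
    exact h i

end MvPolynomial

noncomputable def yScale : MvPolynomial (Fin 4) ℂ →ₐ[ℂ] MvPolynomial (Fin 4) ℂ :=
  aeval ![X 0, (1 + X 0) * X 1, X 2, X 3]

noncomputable def yScaleInv : MvPolynomial (Fin 4) ℂ →ₐ[ℂ] MvPolynomial (Fin 4) ℂ :=
  aeval ![X 0, (1 - X 0) * X 1 - (X 2 ^ 2 + X 0 + X 3 ^ 3), X 2, X 3]

theorem yScale_KRQ : yScale KRQ = (1 + X 0) * KRP := by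
  simp [yScale, KRQ, KRP]
  ring

theorem yScaleInv_KRP : yScaleInv KRP = (1 - X 0) * KRQ := by
  simp [yScaleInv, KRQ, KRP]
  ring

theorem yScaleInv_yScale_X_sub_X (i : Fin 4) :
    yScaleInv (yScale (X i)) - X i = ![0, -KRQ, 0, 0] i := by
  fin_cases i <;> simp [yScale, yScaleInv, KRQ]
  ring

theorem yScale_yScaleInv_X_sub_X (i : Fin 4) :
    yScale (yScaleInv (X i)) - X i = ![0, -KRP, 0, 0] i := by
  fin_cases i <;> simp [yScale, yScaleInv, KRP]
  ring

theorem stmt3 :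
    Nonempty
      ((MvPolynomial (Fin 4) ℂ ⧸ Ideal.span {KRP}) ≃ₐ[ℂ]
        (MvPolynomial (Fin 4) ℂ ⧸ Ideal.span {KRQ})) := by
  have hP : Ideal.span {KRP} ≤ (Ideal.span {KRQ}).comap yScaleInv := by
    rw [Ideal.span_singleton_le_iff_mem, Ideal.mem_comap, yScaleInv_KRP]
    exact Ideal.mul_mem_left _ _ (Ideal.mem_span_singleton_self _)
  have hQ : Ideal.span {KRQ} ≤ (Ideal.span {KRP}).comap yScale := by
    rw [Ideal.span_singleton_le_iff_mem, Ideal.mem_comap, yScale_KRQ]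
    exact Ideal.mul_mem_left _ _ (Ideal.mem_span_singleton_self _)
  refine ⟨Ideal.quotientEquivAlgOfInverseModulo _ _ yScaleInv yScale hP hQ
    (MvPolynomial.mkₐ_comp_eq_mkₐ_of_sub_mem fun i => ?_)
    (MvPolynomial.mkₐ_comp_eq_mkₐ_of_sub_mem fun i => ?_)⟩
  · rw [AlgHom.comp_apply, yScale_yScaleInv_X_sub_X]
    fin_cases i <;> simp
  · rw [AlgHom.comp_apply, yScaleInv_yScale_X_sub_X]
    fin_cases i <;> simp
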